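/- arXiv:2410.01743 — 4 statements merged into one kernel-verified Lean document; each statement's English description precedes it below -/
import Mathlib

section
/- Let M be a positroid on [n] and suppose M = M_1 ⊕ ⋯ ⊕ M_m is a direct sum of matroids M_1, …, M_m on pairwise disjoint nonempty ground sets S_1, …, S_m with S_1 ∪ ⋯ ∪ S_m = [n]; that is, the bases of M are exactly the sets B_1 ∪ ⋯ ∪ B_m where each B_i is a basis of M_i. Then each M_i is a positroid on its ground set S_i with the linear order induced from [n]: writing S_i = {s_1 < s_2 < ⋯ < s_{m_i}} and r_i for the rank of M_i, there exists a real r_i × m_i matrix of rank r_i all of whose r_i × r_i minors are nonnegative, such that a set {s_{j_1}, …, s_{j_{r_i}}} is a basis of M_i if and only if the r_i × r_i minor on columns {j_1, …, j_{r_i}} is nonzero. -/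
namespace PositroidPaper

variable {n : ℕ}

/-- The last element `n` of `[n] = {1,…,n}`, realized as the last element of `Fin n`. -/
def lastF (n : ℕ) [NeZero n] : Fin n :=
  ⟨n - 1, by have := Nat.pos_of_ne_zero (NeZero.ne n); omega⟩

/-- The Gale order `S ≤ᵢ T` with respect to the `i`-order on `Fin n`
(the `i`-order is transported to the natural order on `Fin n` by `a ↦ a - i`). -/
def galeLE (i : Fin n) (S T : Finset (Fin n)) : Prop :=
  List.Forall₂ (· ≤ ·) ((S.image (fun a => a - i)).sort (· ≤ ·))
    ((T.image (fun a => a - i)).sort (· ≤ ·))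

/-- A Grassmann necklace of type `(k,n)`. -/
def IsGrassmannNecklace (n k : ℕ) [NeZero n] (J : Fin n → Finset (Fin n)) : Prop :=
  (∀ i, (J i).card = k) ∧
    ∀ i : Fin n,
      (i ∈ J i → ∃ j : Fin n, J (i + 1) = insert j ((J i).erase i)) ∧
      (i ∉ J i → J (i + 1) = J i)

/-- `B(J)`: the `k`-subsets `B` of `[n]` with `J_i ≤ᵢ B` for all `i`. -/
noncomputable def necklaceBases (n k : ℕ) (J : Fin n → Finset (Fin n)) :
    Finset (Finset (Fin n)) := by
  classical
  exact (Finset.powersetCard k (Finset.univ : Finset (Fin n))).filter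
    (fun B => ∀ i, galeLE i (J i) B)

/-- The maximal minor of a `k × n` matrix on the column set `I` (taken in increasing order);
junk value `0` if `I` does not have exactly `k` elements. -/
noncomputable def colMinor {k n : ℕ} (A : Matrix (Fin k) (Fin n) ℝ) (I : Finset (Fin n)) : ℝ :=
  if h : I.card = k then (A.submatrix id (fun j => ((I.orderIsoOfFin h) j : Fin n))).det else 0

/-- `Bs` is the set of bases of a rank-`k` positroid on `[n]`. -/
def IsPositroidBases (n k : ℕ) (Bs : Finset (Finset (Fin n))) : Prop :=
  ∃ A : Matrix (Fin k) (Fin n) ℝ, A.rank = k ∧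
    (∀ I : Finset (Fin n), 0 ≤ colMinor A I) ∧
    ∀ I : Finset (Fin n), I ∈ Bs ↔ I.card = k ∧ colMinor A I ≠ 0

/-- The 0/1 indicator vector `e_B ∈ ℝ^n` of `B ⊆ [n]`. -/
def indic (B : Finset (Fin n)) : Fin n → ℝ := fun a => if a ∈ B then 1 else 0

/-- The positroid polytope `P_J = conv{e_B : B ∈ B(J)}`. -/
def PJ (n k : ℕ) (J : Fin n → Finset (Fin n)) : Set (Fin n → ℝ) :=
  convexHull ℝ {x | ∃ B ∈ necklaceBases n k J, x = indic B}

/-- The `j`-th element (0-indexed) of `S` in the `i`-order. -/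
noncomputable def nthGale [NeZero n] (i : Fin n) (S : Finset (Fin n)) (j : ℕ) : Fin n :=
  ((S.image (fun a => a - i)).sort (· ≤ ·)).getD j 0 + i

/-- The (closed) cyclic interval `[i,j] ⊆ [n]`. -/
def cycInterval (i j : Fin n) : Finset (Fin n) :=
  Finset.univ.filter (fun a => a - i ≤ j - i)

/-- `x_{[i,j]} = x_i + x_{i+1} + ⋯ + x_{j-1}` (cyclically; the empty sum if `i = j`). -/
def cycSum (x : Fin n → ℝ) (i j : Fin n) : ℝ :=
  ∑ a ∈ Finset.univ.filter (fun a : Fin n => a - i < j - i), x a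

/-- The set of cyclic left descents of the word `w|_S`, where `S ⊆ [n]` is totally ordered
by the `i`-order: an element `a ∈ S` belongs to this set iff either `a` has a successor `b`
in `S` (w.r.t. the `i`-order) occurring to its left in `w`, or `a` is the maximum of `S`,
`S` has at least two elements, and the minimum of `S` occurs to the left of `a` in `w`. -/
noncomputable def cDesL (w : Equiv.Perm (Fin n)) (i : Fin n) (S : Finset (Fin n)) :
    Finset (Fin n) := by
  classical
  exact S.filter (fun a =>
    (∃ b ∈ S, a - i < b - i ∧ (∀ c ∈ S, a - i < c - i → b - i ≤ c - i) ∧ w⁻¹ b < w⁻¹ a) ∨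
    ((∀ b ∈ S, b - i ≤ a - i) ∧ ∃ m ∈ S, m ≠ a ∧ (∀ b ∈ S, m - i ≤ b - i) ∧ w⁻¹ m < w⁻¹ a))

/-- `cdes_L(w|_S)` where `S` is ordered by the `i`-order. -/
noncomputable def cdesL (w : Equiv.Perm (Fin n)) (i : Fin n) (S : Finset (Fin n)) : ℕ :=
  (cDesL w i S).card

/-- The cyclic rotation `w^{(r)}` of the word `w_1 ⋯ w_n` ending at the letter `r`. -/
def rotTo [NeZero n] (w : Equiv.Perm (Fin n)) (r : Fin n) : Equiv.Perm (Fin n) :=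
  (Equiv.addRight (w⁻¹ r + 1)).trans w

/-- `I_r(w) = cDes_L(w^{(r)})`. -/
noncomputable def IrFinset [NeZero n] (w : Equiv.Perm (Fin n)) (r : Fin n) : Finset (Fin n) :=
  cDesL (rotTo w r) 0 Finset.univ

/-- The vertex set `{e_{I_r(w)} : r ∈ [n]}` of the `(w)`-simplex. -/
def vertexSet [NeZero n] (w : Equiv.Perm (Fin n)) : Set (Fin n → ℝ) :=
  {x | ∃ r : Fin n, x = indic (IrFinset w r)}

/-- The `(w)`-simplex `Δ_(w) = conv{e_{I_1(w)},…,e_{I_n(w)}}`. -/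
def simplexW [NeZero n] (w : Equiv.Perm (Fin n)) : Set (Fin n → ℝ) :=
  convexHull ℝ (vertexSet w)

/-- The set `D_J` of permutations labelling the circuit triangulation of `P_J`. -/
noncomputable def DJ (n k : ℕ) [NeZero n] (J : Fin n → Finset (Fin n)) :
    Finset (Equiv.Perm (Fin n)) := by
  classical
  exact Finset.univ.filter (fun w =>
    w (lastF n) = lastF n ∧ cdesL w 0 Finset.univ = k ∧
      ∀ r j : Fin n, galeLE j (J j) (IrFinset w r))

/-- Connectedness of a matroid on `[n]` given by its set of bases: the ground set admits no
partition into nonempty `A`, `Aᶜ` such that every basis is a union of a basis of the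
restriction to `A` and one of the restriction to `Aᶜ`, all such unions being bases. -/
def ConnectedBases (Bs : Finset (Finset (Fin n))) : Prop :=
  ¬ ∃ A : Finset (Fin n), A.Nonempty ∧ Aᶜ.Nonempty ∧
      ∀ B₁ ∈ Bs, ∀ B₂ ∈ Bs, (B₁ ∩ A) ∪ (B₂ \ A) ∈ Bs

/-- `Δ_(u)` and `Δ_(w)` share a common facet. -/
def SharedFacet [NeZero n] (u w : Equiv.Perm (Fin n)) : Prop :=
  (vertexSet u ∩ vertexSet w).ncard = n - 1 ∧
    simplexW u ∩ simplexW w = convexHull ℝ (vertexSet u ∩ vertexSet w)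

/-- The graph `Γ_J` of the circuit triangulation of `P_J`. -/
def gammaJ (n k : ℕ) [NeZero n] (J : Fin n → Finset (Fin n)) :
    SimpleGraph (Equiv.Perm (Fin n)) where
  Adj u w := u ≠ w ∧ u ∈ DJ n k J ∧ w ∈ DJ n k J ∧ SharedFacet u w
  symm := by
    constructor
    rintro u w ⟨hne, hu, hw, hc, hi⟩
    refine ⟨hne.symm, hw, hu, ?_, ?_⟩
    · rwa [Set.inter_comm]
    · rw [Set.inter_comm (simplexW w) (simplexW u), Set.inter_comm (vertexSet w) (vertexSet u)]
      exact hi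
  loopless := ⟨fun u h => h.1 rfl⟩

/-- Graph distance in `Γ_J`. -/
noncomputable def distJ (n k : ℕ) [NeZero n] (J : Fin n → Finset (Fin n))
    (u w : Equiv.Perm (Fin n)) : ℕ :=
  (gammaJ n k J).dist u w

/-- The partial order `≺` on `D_J` determined by `w₀`. -/
def precJ (n k : ℕ) [NeZero n] (J : Fin n → Finset (Fin n))
    (w0 u v : Equiv.Perm (Fin n)) : Prop :=
  u ≠ v ∧ distJ n k J w0 u + distJ n k J u v = distJ n k J w0 v

/-- `cover(w)`: the number of elements of `D_J` covered by `w` in `(D_J, ≺)`. -/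
noncomputable def coverNum (n k : ℕ) [NeZero n] (J : Fin n → Finset (Fin n))
    (w0 w : Equiv.Perm (Fin n)) : ℕ :=
  {u : Equiv.Perm (Fin n) | u ∈ DJ n k J ∧ precJ n k J w0 u w ∧
    ¬ ∃ v ∈ DJ n k J, precJ n k J w0 u v ∧ precJ n k J w0 v w}.ncard

/-- The facet of `Δ_(w)` obtained by deleting the vertex `e_{I_r(w)}`. -/
def facetW [NeZero n] (w : Equiv.Perm (Fin n)) (r : Fin n) : Set (Fin n → ℝ) :=
  convexHull ℝ {x | ∃ r' : Fin n, r' ≠ r ∧ x = indic (IrFinset w r')}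

/-- The Ehrhart counting function `L(X,t) = #(t·X ∩ ℤ^m)`. -/
noncomputable def Lcount {m : ℕ} (X : Set (Fin m → ℝ)) (t : ℕ) : ℕ :=
  ((fun x : Fin m → ℝ => (t : ℝ) • x) '' X ∩ {x | ∀ a, ∃ z : ℤ, x a = (z : ℝ)}).ncard

/-- Projection `ℝ^n → ℝ^{n-1}` onto the first `n-1` coordinates. -/
def proj (n : ℕ) (x : Fin n → ℝ) : Fin (n - 1) → ℝ :=
  fun a => x (Fin.castLE (Nat.sub_le n 1) a)

/-- `F` is an upper facet of `Q ⊆ ℝ^m`. -/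
def IsUpperFacet {m : ℕ} (Q F : Set (Fin m → ℝ)) : Prop :=
  ∃ a b : Fin m, a ≤ b ∧ ∃ c : ℤ,
    F = Q ∩ {x | ∑ t ∈ Finset.Icc a b, x t = (c : ℝ)} ∧
    Q ⊆ {x | ∑ t ∈ Finset.Icc a b, x t ≤ (c : ℝ)} ∧
    Module.finrank ℝ (affineSpan ℝ F).direction = m - 1

/-- The half-open polytope: `Q` with all its upper facets removed. -/
def halfOpen {m : ℕ} (Q : Set (Fin m → ℝ)) : Set (Fin m → ℝ) :=
  Q \ ⋃₀ {F | IsUpperFacet Q F}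

/-- The half-open simplex `∇°_w`. -/
def nablaO [NeZero n] (w : Equiv.Perm (Fin n)) : Set (Fin n → ℝ) :=
  {y | 0 < y (w 0) ∧ y (w (lastF n)) ≤ 1 ∧
    ∀ p : Fin n, p ≠ lastF n →
      (w p < w (p + 1) → y (w p) ≤ y (w (p + 1))) ∧
      (w (p + 1) < w p → y (w p) < y (w (p + 1)))}

/-- `des(w) = #{i ∈ [n-1] : w_i > w_{i+1}}`. -/
noncomputable def desNum [NeZero n] (w : Equiv.Perm (Fin n)) : ℕ := by
  classical
  exact (Finset.univ.filter (fun p : Fin n => p ≠ lastF n ∧ w (p + 1) < w p)).card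

/-- `F` is a facet of the polytope `P ⊆ ℝ^n`. -/
def IsFacetOf {n : ℕ} (P F : Set (Fin n → ℝ)) : Prop :=
  ∃ (u : Fin n → ℝ) (c : ℝ),
    F = P ∩ {x | ∑ a, u a * x a = c} ∧ P ⊆ {x | ∑ a, u a * x a ≤ c} ∧
    Module.finrank ℝ (affineSpan ℝ F).direction + 1 =
      Module.finrank ℝ (affineSpan ℝ P).direction

/-!
Since the bases of `M` are the unions of bases of the summands, fixing a basis `C` of the other
summands, a set `B ⊆ S i` is a basis of `M_i` iff `B ∪ C` is a basis of `M`: the summand is the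
contraction `M / C` restricted to `S i`. Multiplying `A` on the left by the inverse of its square
submatrix on the columns of `B₀` followed by those of `C` (for a basis `B₀` of `M_i`) turns the
columns of `C` into the last unit vectors, so the minor on `B ∪ C` becomes, up to the sign of the
shuffle merging `B` and `C`, the minor of the first `r` rows on `B`. That sign is a product of one
sign per element of `B`, so it is absorbed by changing the signs of columns; a final normalisation
makes the minor on `B` equal to `colMinor A (B ∪ C) / colMinor A (B₀ ∪ C) ≥ 0`.
-/

open Finset Matrix

theorem exists_union_mem_iff {ι α : Type*} [Fintype ι] [DecidableEq ι] [DecidableEq α]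
    {S : ι → Finset α} (hdisj : ∀ i j, i ≠ j → Disjoint (S i) (S j))
    {Bs : ι → Finset (Finset α)} (hBsub : ∀ i, ∀ B ∈ Bs i, B ⊆ S i) (hBne : ∀ i, (Bs i).Nonempty)
    {M : Finset (Finset α)}
    (hM : ∀ B, B ∈ M ↔ ∃ f : ι → Finset α, (∀ i, f i ∈ Bs i) ∧ B = univ.biUnion f) (i : ι) :
    ∃ C, Disjoint (S i) C ∧ ∀ B ⊆ S i, B ∈ Bs i ↔ B ∪ C ∈ M := by
  choose g hg using hBne
  have hsplit (f : ι → Finset α) : univ.biUnion f = f i ∪ (univ.erase i).biUnion f := by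
    rw [← biUnion_insert, insert_erase (mem_univ i)]
  have hdisj_of_mem {f : ι → Finset α} (hf : ∀ j, f j ∈ Bs j) :
      Disjoint (S i) ((univ.erase i).biUnion f) :=
    (disjoint_biUnion_right _ _ _).2 fun j hj =>
      (hdisj i j (ne_of_mem_erase hj).symm).mono_right (hBsub j _ (hf j))
  have hproj {X Y : Finset α} (hX : X ⊆ S i) (hY : Disjoint (S i) Y) : (X ∪ Y) ∩ S i = X := by
    rw [union_inter_distrib_right, inter_eq_left.2 hX, disjoint_iff_inter_eq_empty.1 hY.symm,
      union_empty]
  refine ⟨(univ.erase i).biUnion g, hdisj_of_mem hg, fun B hB => ⟨fun hBi => ?_, fun hBC => ?_⟩⟩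
  · refine (hM _).2 ⟨Function.update g i B, fun j => ?_, ?_⟩
    · rcases eq_or_ne j i with rfl | hj
      · simpa using hBi
      · simpa [hj] using hg j
    · rw [hsplit, Function.update_self]
      exact congrArg (B ∪ ·) (biUnion_congr rfl fun j hj =>
        (Function.update_of_ne (ne_of_mem_erase hj) _ _).symm)
  · obtain ⟨f, hf, hBf⟩ := (hM _).1 hBC
    rw [hsplit] at hBf
    have hBfi : B = f i := by
      rw [← hproj hB (hdisj_of_mem hg), hBf, hproj (hBsub i _ (hf i)) (hdisj_of_mem hf)]
    exact hBfi ▸ hf i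

theorem prod_orderEmbOfFin {α M : Type*} [LinearOrder α] [CommMonoid M] (s : Finset α) {k : ℕ}
    (h : #s = k) (g : α → M) : ∏ p, g (s.orderEmbOfFin h p) = ∏ a ∈ s, g a := by
  conv_rhs => rw [← s.image_orderEmbOfFin_univ h]
  exact (prod_image fun x _ y _ hxy => (s.orderEmbOfFin h).injective hxy).symm

theorem castAdd_lt_natAdd {r t : ℕ} (p : Fin r) (q : Fin t) :
    Fin.castAdd t p < Fin.natAdd r q := by
  simp only [Fin.lt_def, Fin.val_castAdd, Fin.val_natAdd]
  omega

theorem prod_inversions_append {β : Type*} [LinearOrder β] {r t : ℕ} {u : Fin r → β}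
    {v : Fin t → β} (hu : StrictMono u) (hv : StrictMono v) :
    (∏ j, ∏ i ∈ Iio j, if Fin.append u v i < Fin.append u v j then 1 else -1 : ℝ) =
      ∏ p, ∏ q, if u p < v q then 1 else -1 := by
  have hnlt (p : Fin r) (q : Fin t) : ¬ Fin.natAdd r q < Fin.castAdd t p :=
    (castAdd_lt_natAdd p q).asymm
  simp +contextual only [← filter_gt_eq_Iio, prod_filter, Fin.prod_univ_add, Fin.append_left,
    Fin.append_right, hu.lt_iff_lt, hv.lt_iff_lt, (Fin.strictMono_castAdd t).lt_iff_lt,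
    Fin.natAdd_lt_natAdd_iff, castAdd_lt_natAdd, hnlt, if_true, if_false, ite_self,
    prod_const_one, one_mul, mul_one]
  exact prod_comm

section Minors

variable {k : ℕ}

theorem colMinor_eq_det (A : Matrix (Fin k) (Fin n) ℝ) {I : Finset (Fin n)} (h : #I = k) :
    colMinor A I = (A.submatrix id (I.orderEmbOfFin h)).det := by
  rw [colMinor, dif_pos h]
  rfl

theorem colMinor_of_card_ne (A : Matrix (Fin k) (Fin n) ℝ) {I : Finset (Fin n)} (h : #I ≠ k) :
    colMinor A I = 0 :=
  dif_neg h

theorem colMinor_mul_left (G : Matrix (Fin k) (Fin k) ℝ) (A : Matrix (Fin k) (Fin n) ℝ)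
    (I : Finset (Fin n)) : colMinor (G * A) I = G.det * colMinor A I := by
  by_cases h : #I = k
  · rw [colMinor_eq_det _ h, colMinor_eq_det _ h, ← det_mul]
    rfl
  · rw [colMinor_of_card_ne _ h, colMinor_of_card_ne _ h, mul_zero]

theorem colMinor_mul_diagonal (A : Matrix (Fin k) (Fin n) ℝ) (d : Fin n → ℝ)
    (I : Finset (Fin n)) : colMinor (A * diagonal d) I = (∏ b ∈ I, d b) * colMinor A I := by
  by_cases h : #I = k
  · rw [colMinor_eq_det _ h, colMinor_eq_det _ h]
    have hsub : (A * diagonal d).submatrix id (I.orderEmbOfFin h) =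
        A.submatrix id (I.orderEmbOfFin h) * diagonal (d ∘ I.orderEmbOfFin h) := by
      ext p q
      simp [mul_diagonal]
    rw [hsub, det_mul, det_diagonal, mul_comm, ← prod_orderEmbOfFin I h]
    rfl
  · rw [colMinor_of_card_ne _ h, colMinor_of_card_ne _ h, mul_zero]

theorem colMinor_submatrix {s : ℕ} (A : Matrix (Fin k) (Fin n) ℝ) {ι : Fin s → Fin n}
    (hι : StrictMono ι) (B : Finset (Fin s)) :
    colMinor (A.submatrix id ι) B = colMinor A (B.image ι) := by
  have hcard : #(B.image ι) = #B := card_image_of_injective B hι.injective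
  by_cases h : #B = k
  · rw [colMinor_eq_det _ h, colMinor_eq_det _ (hcard.trans h)]
    congr 1
    ext p q
    simp only [submatrix_apply, id]
    congr 1
    exact congrFun (orderEmbOfFin_unique _ (fun j => mem_image_of_mem ι
      (B.orderEmbOfFin_mem h j)) (hι.comp (B.orderEmbOfFin h).strictMono)) q
  · rw [colMinor_of_card_ne _ h, colMinor_of_card_ne _ (hcard.trans_ne h)]

theorem rank_eq_of_colMinor_ne_zero (A : Matrix (Fin k) (Fin n) ℝ) {I : Finset (Fin n)}
    (hI : colMinor A I ≠ 0) : A.rank = k := by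
  have h : #I = k := by_contra fun h => hI (colMinor_of_card_ne A h)
  rw [colMinor_eq_det _ h] at hI
  refine le_antisymm (rank_le_height A) ?_
  calc k = (A.submatrix id (I.orderEmbOfFin h)).rank := by
        rw [rank_of_isUnit _ ((isUnit_iff_isUnit_det _).2 (isUnit_iff_ne_zero.2 hI)),
          Fintype.card_fin]
    _ ≤ A.rank := rank_submatrix_le _ _ _

theorem det_submatrix_eq_inversions_mul_colMinor (X : Matrix (Fin k) (Fin n) ℝ)
    {f : Fin k → Fin n} (hf : Function.Injective f) :
    (X.submatrix id f).det =
      (∏ j, ∏ i ∈ Iio j, if f i < f j then 1 else -1) * colMinor X (univ.image f) := by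
  have h : #(univ.image f) = k := by rw [card_image_of_injective _ hf, card_fin]
  set g := (univ.image f).orderEmbOfFin h
  let θ : Equiv.Perm (Fin k) := Equiv.ofBijective
    (fun x => ((univ.image f).orderIsoOfFin h).symm ⟨f x, mem_image_of_mem f (mem_univ x)⟩)
    (Finite.injective_iff_bijective.1 fun x y hxy => hf (by simpa using hxy))
  have hθ : ∀ x, g (θ x) = f x := fun x => by simp [g, θ, ← coe_orderIsoOfFin_apply]
  have hsub : X.submatrix id f = (X.submatrix id g).submatrix id θ := by
    ext p q
    simp [hθ]
  rw [hsub, det_permute', colMinor_eq_det X h, θ.sign_eq_prod_prod_Iio]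
  simp only [← hθ, g.lt_iff_lt]
  push_cast [apply_ite (fun u : ℤˣ => ((u : ℤ) : ℝ))]
  rfl

end Minors

theorem det_submatrix_append_eq_mul_colMinor {r t : ℕ} (X : Matrix (Fin (r + t)) (Fin n) ℝ)
    {B C : Finset (Fin n)} (hBC : Disjoint B C) (hB : #B = r) (hC : #C = t) :
    (X.submatrix id (Fin.append (B.orderEmbOfFin hB) (C.orderEmbOfFin hC))).det =
      (∏ b ∈ B, ∏ c ∈ C, if b < c then 1 else -1) * colMinor X (B ∪ C) := by
  set f := Fin.append (B.orderEmbOfFin hB) (C.orderEmbOfFin hC)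
  have hmem : ∀ j, f j ∈ B ∪ C := (Fin.forall_fin_add _).2
    ⟨fun p => by simp [f, orderEmbOfFin_mem], fun q => by simp [f, orderEmbOfFin_mem]⟩
  have hf : Function.Injective f := Fin.append_injective_iff.2 ⟨(B.orderEmbOfFin hB).injective,
    (C.orderEmbOfFin hC).injective, fun p q h => disjoint_left.1 hBC (orderEmbOfFin_mem B hB p)
      (h ▸ orderEmbOfFin_mem C hC q)⟩
  have himage : univ.image f = B ∪ C := by
    refine eq_of_subset_of_card_le (fun x hx => ?_) ?_
    · obtain ⟨j, -, rfl⟩ := mem_image.1 hx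
      exact hmem j
    · rw [card_image_of_injective _ hf, card_union_of_disjoint hBC, hB, hC, card_fin]
  rw [det_submatrix_eq_inversions_mul_colMinor X hf, himage,
    prod_inversions_append (B.orderEmbOfFin hB).strictMono (C.orderEmbOfFin hC).strictMono,
    ← prod_orderEmbOfFin B hB]
  simp only [← prod_orderEmbOfFin C hC]

theorem det_submatrix_append_of_unit_columns {r t : ℕ} (X : Matrix (Fin (r + t)) (Fin n) ℝ)
    (u : Fin r → Fin n) {v : Fin t → Fin n}
    (hv : ∀ i q, X i (v q) = (1 : Matrix (Fin (r + t)) (Fin (r + t)) ℝ) i (Fin.natAdd r q)) :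
    (X.submatrix id (Fin.append u v)).det = (X.submatrix (Fin.castAdd t) u).det := by
  have hblocks : X.submatrix id (Fin.append u v) =
      (fromBlocks (X.submatrix (Fin.castAdd t) u) 0 (X.submatrix (Fin.natAdd r) u) 1).submatrix
        finSumFinEquiv.symm finSumFinEquiv.symm := by
    ext i j
    refine Fin.addCases (fun p => ?_) (fun q => ?_) i <;>
      refine Fin.addCases (fun p' => ?_) (fun q' => ?_) j <;>
      simp [hv, one_apply, (castAdd_lt_natAdd _ _).ne]
  rw [hblocks, det_submatrix_equiv_self, det_fromBlocks_zero₁₂, det_one, mul_one]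

theorem exists_colMinor_eq_div_colMinor_union {r t : ℕ} (A : Matrix (Fin (r + t)) (Fin n) ℝ)
    {B₀ C : Finset (Fin n)} (hB₀ : #B₀ = r) (hC : #C = t) (hB₀C : Disjoint B₀ C)
    (h₀ : colMinor A (B₀ ∪ C) ≠ 0) :
    ∃ X : Matrix (Fin r) (Fin n) ℝ, ∀ B : Finset (Fin n), #B = r → Disjoint B C →
      colMinor X B = colMinor A (B ∪ C) / colMinor A (B₀ ∪ C) := by
  set sgn : Fin n → ℝ := fun b => ∏ c ∈ C, if b < c then 1 else -1
  have hsgn (B : Finset (Fin n)) : (∏ b ∈ B, sgn b) * ∏ b ∈ B, sgn b = 1 := by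
    simp only [sgn, ← prod_mul_distrib]
    exact prod_eq_one fun b _ => prod_eq_one fun c _ => by split_ifs <;> norm_num
  set Q := A.submatrix id (Fin.append (B₀.orderEmbOfFin hB₀) (C.orderEmbOfFin hC))
  have hQ : Q.det ≠ 0 := by
    rw [det_submatrix_append_eq_mul_colMinor A hB₀C hB₀ hC]
    exact mul_ne_zero (left_ne_zero_of_mul_eq_one (hsgn B₀)) h₀
  set N := Q⁻¹ * A
  have hNC (i q) : N i (C.orderEmbOfFin hC q) =
      (1 : Matrix (Fin (r + t)) (Fin (r + t)) ℝ) i (Fin.natAdd r q) := by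
    rw [← nonsing_inv_mul Q (isUnit_iff_ne_zero.2 hQ)]
    simp [N, Q, mul_apply]
  set Y := N.submatrix (Fin.castAdd t) id * diagonal sgn
  have hY (B : Finset (Fin n)) (hB : #B = r) (hBC : Disjoint B C) :
      colMinor Y B = Q.det⁻¹ * colMinor A (B ∪ C) := by
    have hN : colMinor (N.submatrix (Fin.castAdd t) id) B =
        (∏ b ∈ B, sgn b) * colMinor N (B ∪ C) := by
      rw [colMinor_eq_det _ hB, ← det_submatrix_append_eq_mul_colMinor N hBC hB hC,
        det_submatrix_append_of_unit_columns N _ hNC]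
      rfl
    rw [colMinor_mul_diagonal, hN, ← mul_assoc, hsgn, one_mul, colMinor_mul_left,
      det_nonsing_inv, Ring.inverse_eq_inv']
  refine ⟨(Y.submatrix id (B₀.orderEmbOfFin hB₀))⁻¹ * Y, fun B hB hBC => ?_⟩
  rw [colMinor_mul_left, det_nonsing_inv, Ring.inverse_eq_inv', ← colMinor_eq_det, hY B hB hBC,
    hY B₀ hB₀ hB₀C]
  field_simp

theorem exists_colMinor_eq_div_colMinor_image_union {r t : ℕ}
    (A : Matrix (Fin (r + t)) (Fin n) ℝ) {S B₀ C : Finset (Fin n)} (hSC : Disjoint S C)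
    (hB₀S : B₀ ⊆ S) (hB₀ : #B₀ = r) (hC : #C = t) (h₀ : colMinor A (B₀ ∪ C) ≠ 0) :
    ∃ X : Matrix (Fin r) (Fin #S) ℝ, ∀ B : Finset (Fin #S), #B = r →
      colMinor X B = colMinor A (B.image (S.orderEmbOfFin rfl) ∪ C) / colMinor A (B₀ ∪ C) := by
  obtain ⟨X, hX⟩ := exists_colMinor_eq_div_colMinor_union A hB₀ hC (hSC.mono_left hB₀S) h₀
  refine ⟨X.submatrix id (S.orderEmbOfFin rfl), fun B hB => ?_⟩
  have hBS : B.image (S.orderEmbOfFin rfl) ⊆ S := fun x hx => by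
    obtain ⟨j, -, rfl⟩ := mem_image.1 hx
    exact S.orderEmbOfFin_mem rfl j
  rw [colMinor_submatrix _ (S.orderEmbOfFin rfl).strictMono,
    hX _ ((card_image_of_injective _ (S.orderEmbOfFin rfl).injective).trans hB) (hSC.mono_left hBS)]

theorem connected_summands_of_positroid_are_positroids_general
    (n m k : ℕ) (S : Fin m → Finset (Fin n))
    (hdisj : ∀ i j, i ≠ j → Disjoint (S i) (S j))
    (Bs : Fin m → Finset (Finset (Fin n))) (r : Fin m → ℕ)
    (hBsub : ∀ i, ∀ B ∈ Bs i, B ⊆ S i)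
    (hBcard : ∀ i, ∀ B ∈ Bs i, B.card = r i)
    (hBne : ∀ i, (Bs i).Nonempty)
    (M : Finset (Finset (Fin n)))
    (hM : ∀ B : Finset (Fin n),
      B ∈ M ↔ ∃ f : Fin m → Finset (Fin n), (∀ i, f i ∈ Bs i) ∧ B = Finset.univ.biUnion f)
    (hMpos : IsPositroidBases n k M) :
    ∀ i : Fin m, ∃ A : Matrix (Fin (r i)) (Fin (S i).card) ℝ,
      A.rank = r i ∧ (∀ I : Finset (Fin (S i).card), 0 ≤ colMinor A I) ∧
      ∀ B : Finset (Fin (S i).card), B.card = r i →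
        (B.image (fun j => (((S i).orderIsoOfFin rfl) j : Fin n)) ∈ Bs i ↔
          colMinor A B ≠ 0) := by
  intro i
  obtain ⟨A, -, hA, hAM⟩ := hMpos
  obtain ⟨C, hSC, hC⟩ := exists_union_mem_iff hdisj hBsub hBne hM i
  obtain ⟨B₀, hB₀⟩ := hBne i
  obtain ⟨hB₀k, hB₀A⟩ := (hAM _).1 ((hC B₀ (hBsub i B₀ hB₀)).1 hB₀)
  obtain rfl : r i + #C = k := by
    rw [← hB₀k, card_union_of_disjoint (hSC.mono_left (hBsub i B₀ hB₀)), hBcard i B₀ hB₀]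
  obtain ⟨X, hX⟩ := exists_colMinor_eq_div_colMinor_image_union A hSC (hBsub i B₀ hB₀)
    (hBcard i B₀ hB₀) rfl hB₀A
  have hpos : 0 < colMinor A (B₀ ∪ C) := (hA _).lt_of_ne' hB₀A
  rw [show (fun j => ((S i).orderIsoOfFin rfl j : Fin n)) = (S i).orderEmbOfFin rfl from rfl]
  set ι := (S i).orderEmbOfFin rfl
  have hιS : univ.image ι = S i := (S i).image_orderEmbOfFin_univ rfl
  have hcard (B : Finset (Fin #(S i))) : #(B.image ι) = #B := card_image_of_injective _ ι.injective
  obtain ⟨B₀', -, rfl⟩ := subset_image_iff.1 ((hBsub i _ hB₀).trans hιS.ge)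
  refine ⟨X, rank_eq_of_colMinor_ne_zero _ (I := B₀') ?_, fun I => ?_, fun B hB => ?_⟩
  · rw [hX B₀' ((hcard B₀').symm.trans (hBcard i _ hB₀)), div_self hB₀A]
    exact one_ne_zero
  · by_cases hI : #I = r i
    · exact hX I hI ▸ div_nonneg (hA _) hpos.le
    · exact (colMinor_of_card_ne _ hI).ge
  · have hBS : B.image ι ⊆ S i := (image_subset_image (subset_univ B)).trans hιS.le
    have hk : #(B.image ι ∪ C) = r i + #C := by
      rw [card_union_of_disjoint (hSC.mono_left hBS), hcard, hB]
    rw [hC _ hBS, hAM, hX B hB, div_ne_zero_iff, and_iff_left hB₀A, and_iff_right hk]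

theorem connected_summands_of_positroid_are_positroids
    (n m k : ℕ) (S : Fin m → Finset (Fin n))
    (hSne : ∀ i, (S i).Nonempty)
    (hdisj : ∀ i j, i ≠ j → Disjoint (S i) (S j))
    (hcover : ∀ a : Fin n, ∃ i, a ∈ S i)
    (Bs : Fin m → Finset (Finset (Fin n))) (r : Fin m → ℕ)
    (hBsub : ∀ i, ∀ B ∈ Bs i, B ⊆ S i)
    (hBcard : ∀ i, ∀ B ∈ Bs i, B.card = r i)
    (hBne : ∀ i, (Bs i).Nonempty)
    (hexch : ∀ i, ∀ B₁ ∈ Bs i, ∀ B₂ ∈ Bs i, ∀ a ∈ B₁,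
      ∃ b ∈ B₂, insert b (B₁.erase a) ∈ Bs i)
    (M : Finset (Finset (Fin n)))
    (hM : ∀ B : Finset (Fin n),
      B ∈ M ↔ ∃ f : Fin m → Finset (Fin n), (∀ i, f i ∈ Bs i) ∧ B = Finset.univ.biUnion f)
    (hMpos : IsPositroidBases n k M) :
    ∀ i : Fin m, ∃ A : Matrix (Fin (r i)) (Fin (S i).card) ℝ,
      A.rank = r i ∧ (∀ I : Finset (Fin (S i).card), 0 ≤ colMinor A I) ∧
      ∀ B : Finset (Fin (S i).card), B.card = r i →
        (B.image (fun j => (((S i).orderIsoOfFin rfl) j : Fin n)) ∈ Bs i ↔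
          colMinor A B ≠ 0) :=
  connected_summands_of_positroid_are_positroids_general n m k S hdisj Bs r hBsub hBcard hBne M hM
    hMpos

end PositroidPaper
end

section
/- Let J = (J_1,…,J_n) be a Grassmann necklace of type (k,n) with 1 ≤ k ≤ n. For each i ∈ [n], write the elements of J_i as a_1^i <_i a_2^i <_i ⋯ <_i a_k^i. Then the positroid polytope P_J := conv{e_B : B ∈ B(J)} equals the set of x ∈ ℝ^n satisfying: x_1 + x_2 + ⋯ + x_n = k; x_i ≥ 0 for all i ∈ [n]; and x_{[i, a_j^i]} ≤ j−1 for all i ∈ [n] and j ∈ [k]. -/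
/-!
Let `P c = x_0 + ⋯ + x_{c-1}`. For `t ∈ [0,1)`, round `x` to the 0/1 vector whose partial sums
are `⌈P c - t⌉`; this needs `0 ≤ x ≤ 1`, and `x_a ≤ 1` follows from an inequality with `i = a` and
`j ≤ 1`, or from `∑ x = k` if `k ≤ 1`.
Each cyclic interval sum `x_{[i,m]}` is a difference of two partial sums plus `0` or `k`, so every
inequality `x_{[i,m]} ≤ b` with integral `b` survives the rounding. Averaged over `t`, the
roundings give back `x` (`∫₀¹ ⌈y - t⌉ dt = y`), and only finitely many of them occur, so `x` is a
convex combination of indicators of `k`-sets obeying the inequalities. For an indicator `e_B`,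
`x_{[i, a_j^i]}` counts the elements of `B` that precede the `j`-th element of `J_i` in the
`i`-order, so these inequalities say exactly that `B` lies above every `J_i` in the Gale order.
-/

namespace PositroidPaper

variable {n : ℕ}

open Finset

section SortedFinset

variable {α : Type*} [LinearOrder α] {k : ℕ}

theorem card_filter_lt_orderEmbOfFin {s : Finset α} (h : #s = k) (j : Fin k) :
    #{b ∈ s | b < s.orderEmbOfFin h j} = j := by
  have hset :
      {b ∈ s | b < s.orderEmbOfFin h j} = (Iio j).map (s.orderEmbOfFin h).toEmbedding := by
    ext b
    simp only [mem_filter, mem_map, mem_Iio, RelEmbedding.coe_toEmbedding]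
    constructor
    · rintro ⟨hb, hlt⟩
      obtain ⟨l, rfl⟩ : b ∈ Set.range (s.orderEmbOfFin h) := by rwa [range_orderEmbOfFin]
      exact ⟨l, (s.orderEmbOfFin h).lt_iff_lt.1 hlt, rfl⟩
    · rintro ⟨l, hl, rfl⟩
      exact ⟨orderEmbOfFin_mem s h l, (s.orderEmbOfFin h).lt_iff_lt.2 hl⟩
  rw [hset, card_map, Fin.card_Iio]

theorem le_orderEmbOfFin_iff {s : Finset α} (h : #s = k) (j : Fin k) (c : α) :
    c ≤ s.orderEmbOfFin h j ↔ #{b ∈ s | b < c} ≤ j := by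
  rw [← card_filter_lt_orderEmbOfFin h j]
  constructor
  · intro hc
    exact card_le_card fun b hb => by
      simp only [mem_filter] at hb ⊢
      exact ⟨hb.1, hb.2.trans_le hc⟩
  · intro hcard
    by_contra! hlt
    have hsub : insert (s.orderEmbOfFin h j) {b ∈ s | b < s.orderEmbOfFin h j} ⊆
        {b ∈ s | b < c} := by
      intro b hb
      simp only [mem_insert, mem_filter] at hb ⊢
      rcases hb with rfl | ⟨hb, hbj⟩
      · exact ⟨orderEmbOfFin_mem s h j, hlt⟩
      · exact ⟨hb, hbj.trans hlt⟩
    have := card_le_card hsub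
    rw [card_insert_of_notMem (by simp)] at this
    omega

theorem forall₂_sort_le_iff {s t : Finset α} (hs : #s = k) (ht : #t = k) :
    List.Forall₂ (· ≤ ·) (s.sort (· ≤ ·)) (t.sort (· ≤ ·)) ↔
      ∀ j : Fin k, #{b ∈ t | b < s.orderEmbOfFin hs j} ≤ j := by
  simp_rw [← le_orderEmbOfFin_iff ht, orderEmbOfFin_apply]
  simp only [List.forall₂_iff_get, length_sort, hs, ht, true_and, List.get_eq_getElem]
  exact ⟨fun H j => H j j.2 j.2, fun H j h₁ _ => H ⟨j, h₁⟩⟩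

end SortedFinset

theorem card_image_sub [NeZero n] (S : Finset (Fin n)) (i : Fin n) : #(S.image (· - i)) = #S :=
  card_image_of_injective _ sub_left_injective

theorem sum_indic (B : Finset (Fin n)) : ∑ a, indic B a = #B := by
  simp [indic]

theorem cycSum_indic (B : Finset (Fin n)) (i m : Fin n) :
    cycSum (indic B) i m = #{b ∈ B | b - i < m - i} := by
  unfold cycSum indic
  rw [sum_boole]
  congr 2
  ext b
  simp [and_comm]

theorem nthGale_sub_self [NeZero n] {k : ℕ} {S : Finset (Fin n)} (hS : #S = k) (i : Fin n)
    (j : Fin k) :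
    nthGale i S j - i = (S.image (· - i)).orderEmbOfFin ((card_image_sub S i).trans hS) j := by
  have hlen : j < ((S.image (· - i)).sort (· ≤ ·)).length := by
    rw [length_sort, card_image_sub, hS]; exact j.2
  rw [nthGale, add_sub_cancel_right, List.getD_eq_getElem _ _ hlen, orderEmbOfFin_apply]
  rfl

theorem galeLE_iff_cycSum_indic_le [NeZero n] {k : ℕ} {S B : Finset (Fin n)} (hS : #S = k)
    (hB : #B = k) (i : Fin n) :
    galeLE i S B ↔ ∀ j : Fin k, cycSum (indic B) i (nthGale i S j) ≤ j := by
  rw [galeLE, forall₂_sort_le_iff ((card_image_sub S i).trans hS) ((card_image_sub B i).trans hB)]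
  refine forall_congr' fun j => ?_
  rw [cycSum_indic, nthGale_sub_self hS, filter_image,
    card_image_of_injective _ sub_left_injective]
  exact Nat.cast_le.symm

def necklaceIneqSet (n k : ℕ) [NeZero n] (J : Fin n → Finset (Fin n)) : Set (Fin n → ℝ) :=
  {x | (∑ a, x a) = (k : ℝ) ∧ (∀ a, 0 ≤ x a) ∧
    ∀ i : Fin n, ∀ j : Fin k, cycSum x i (nthGale i (J i) j.val) ≤ (j.val : ℝ)}

section NecklaceIneqSet

variable [NeZero n] {k : ℕ} {J : Fin n → Finset (Fin n)}

theorem mem_necklaceBases_iff (hJ : ∀ i, #(J i) = k) {B : Finset (Fin n)} :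
    B ∈ necklaceBases n k J ↔
      #B = k ∧ ∀ i (j : Fin k), cycSum (indic B) i (nthGale i (J i) j) ≤ (j : ℕ) := by
  simp only [necklaceBases, mem_filter, mem_powersetCard, subset_univ, true_and]
  exact and_congr_right fun hB => forall_congr' fun i => galeLE_iff_cycSum_indic_le (hJ i) hB i

theorem indic_mem_necklaceIneqSet (hJ : ∀ i, #(J i) = k) {B : Finset (Fin n)}
    (hB : B ∈ necklaceBases n k J) : indic B ∈ necklaceIneqSet n k J := by
  obtain ⟨hcard, hle⟩ := (mem_necklaceBases_iff hJ).1 hB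
  refine ⟨by rw [sum_indic, hcard], fun a => ?_, hle⟩
  unfold indic
  split_ifs <;> norm_num

theorem convex_necklaceIneqSet : Convex ℝ (necklaceIneqSet n k J) := by
  have hlin : ∀ s : Finset (Fin n), IsLinearMap ℝ fun x : Fin n → ℝ => ∑ a ∈ s, x a :=
    fun s => ⟨fun x y => sum_add_distrib, fun c x => (mul_sum ..).symm⟩
  simp only [necklaceIneqSet, Set.ofPred_and, Set.ofPred_forall]
  exact (convex_hyperplane (hlin univ) _).inter
    ((convex_iInter fun a => convex_halfSpace_ge (LinearMap.proj a).isLinear _).inter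
      (convex_iInter fun i => convex_iInter fun j => convex_halfSpace_le (hlin _) _))

theorem le_cycSum_of_ne {x : Fin n → ℝ} (hx : ∀ a, 0 ≤ x a) {i m : Fin n} (h : m ≠ i) :
    x i ≤ cycSum x i m :=
  single_le_sum (fun a _ => hx a) <| mem_filter.2
    ⟨mem_univ i, by rw [sub_self]; exact (Fin.pos_iff_ne_zero' _).2 (sub_ne_zero.2 h)⟩

theorem nthGale_zero_ne_one {S : Finset (Fin n)} (hS : 1 < #S) (i : Fin n) :
    nthGale i S 0 ≠ nthGale i S 1 := by
  intro h
  have h' : nthGale i S 0 - i = nthGale i S 1 - i := by rw [h]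
  rw [nthGale_sub_self rfl i ⟨0, by omega⟩, nthGale_sub_self rfl i ⟨1, hS⟩] at h'
  simpa using (orderEmbOfFin _ _).injective h'

theorem le_one_of_mem_necklaceIneqSet (hJ : ∀ i, #(J i) = k) {x : Fin n → ℝ}
    (hx : x ∈ necklaceIneqSet n k J) (a : Fin n) : x a ≤ 1 := by
  obtain ⟨hsum, h0, hle⟩ := hx
  rcases le_or_gt k 1 with hk | hk
  · calc x a ≤ ∑ b, x b := single_le_sum (fun b _ => h0 b) (mem_univ a)
      _ = k := hsum
      _ ≤ 1 := by exact_mod_cast hk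
  · obtain ⟨j, hj, hja⟩ : ∃ j : Fin k, j.val ≤ 1 ∧ nthGale a (J a) j ≠ a := by
      by_cases h : nthGale a (J a) 0 = a
      · refine ⟨⟨1, hk⟩, le_rfl, fun h1 => ?_⟩
        exact nthGale_zero_ne_one (S := J a) (by rwa [hJ]) a (h.trans h1.symm)
      · exact ⟨⟨0, by omega⟩, zero_le_one, h⟩
    calc x a ≤ cycSum x a (nthGale a (J a) j) := le_cycSum_of_ne h0 hja
      _ ≤ (j : ℕ) := hle a j
      _ ≤ 1 := by exact_mod_cast hj

end NecklaceIneqSet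

def partialSum (x : Fin n → ℝ) (c : ℕ) : ℝ :=
  ∑ a ∈ ({a | (a : ℕ) < c} : Finset (Fin n)), x a

theorem partialSum_zero (x : Fin n → ℝ) : partialSum x 0 = 0 := by
  simp [partialSum]

theorem partialSum_succ (x : Fin n → ℝ) {c : ℕ} (hc : c < n) :
    partialSum x (c + 1) = partialSum x c + x ⟨c, hc⟩ := by
  have hset : ({a | (a : ℕ) < c + 1} : Finset (Fin n)) =
      insert (⟨c, hc⟩ : Fin n) ({a | (a : ℕ) < c} : Finset (Fin n)) := by
    ext a
    simp only [mem_filter, mem_univ, true_and, mem_insert, Fin.ext_iff]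
    omega
  rw [partialSum, partialSum, hset, sum_insert (by simp), add_comm]

theorem partialSum_eq_sum (x : Fin n → ℝ) : partialSum x n = ∑ a, x a := by
  simp [partialSum]

theorem cycSum_add_partialSum (x : Fin n → ℝ) (i m : Fin n) :
    cycSum x i m + partialSum x i = partialSum x m + if m < i then ∑ a, x a else 0 := by
  have hsub : ∀ a : Fin n,
      ((a - i : Fin n) : ℕ) = if i ≤ a then (a : ℕ) - i else n + a - i := by
    intro a
    split_ifs with h
    · exact Fin.coe_sub_iff_le.2 h
    · exact Fin.coe_sub_iff_lt.2 (not_le.1 h)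
  have hite : (if m < i then ∑ a, x a else 0) = ∑ a, if m < i then x a else 0 := by
    split_ifs <;> simp
  rw [cycSum, partialSum, partialSum, hite, sum_filter, sum_filter, sum_filter,
    ← sum_add_distrib, ← sum_add_distrib]
  refine sum_congr rfl fun a _ => ?_
  simp only [Fin.lt_def, Fin.le_def, hsub]
  have := a.isLt
  have := i.isLt
  have := m.isLt
  split_ifs <;> first | (exfalso; omega) | ring

section Rounding

variable {x : Fin n → ℝ} {t : ℝ}

noncomputable def roundSet (x : Fin n → ℝ) (t : ℝ) : Finset (Fin n) :=
  {a | ⌈partialSum x a - t⌉ < ⌈partialSum x ((a : ℕ) + 1) - t⌉}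

theorem indic_roundSet_apply (h0 : ∀ a, 0 ≤ x a) (h1 : ∀ a, x a ≤ 1) (a : Fin n) :
    indic (roundSet x t) a =
      ((⌈partialSum x ((a : ℕ) + 1) - t⌉ - ⌈partialSum x a - t⌉ : ℤ) : ℝ) := by
  have hstep : partialSum x ((a : ℕ) + 1) = partialSum x a + x a := partialSum_succ x a.isLt
  have hlo : ⌈partialSum x a - t⌉ ≤ ⌈partialSum x ((a : ℕ) + 1) - t⌉ :=
    Int.ceil_mono (by linarith [h0 a])
  have hhi : ⌈partialSum x ((a : ℕ) + 1) - t⌉ ≤ ⌈partialSum x a - t⌉ + 1 := by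
    rw [← Int.ceil_add_one]
    exact Int.ceil_mono (by linarith [h1 a])
  simp only [indic, roundSet, mem_filter, mem_univ, true_and]
  split_ifs with h
  · rw [(by omega : ⌈partialSum x ((a : ℕ) + 1) - t⌉ - ⌈partialSum x a - t⌉ = 1), Int.cast_one]
  · rw [(by omega : ⌈partialSum x ((a : ℕ) + 1) - t⌉ - ⌈partialSum x a - t⌉ = 0), Int.cast_zero]

theorem partialSum_indic_roundSet (h0 : ∀ a, 0 ≤ x a) (h1 : ∀ a, x a ≤ 1) (ht0 : 0 ≤ t)
    (ht1 : t < 1) : ∀ c ≤ n, partialSum (indic (roundSet x t)) c = ⌈partialSum x c - t⌉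
  | 0, _ => by
    rw [partialSum_zero, partialSum_zero, zero_sub, Int.ceil_neg,
      Int.floor_eq_zero_iff.2 ⟨ht0, ht1⟩, neg_zero, Int.cast_zero]
  | c + 1, hc => by
    rw [partialSum_succ _ hc, partialSum_indic_roundSet h0 h1 ht0 ht1 c (by omega),
      indic_roundSet_apply h0 h1]
    push_cast
    ring

theorem card_roundSet {k : ℕ} (hsum : ∑ a, x a = k) (h0 : ∀ a, 0 ≤ x a) (h1 : ∀ a, x a ≤ 1)
    (ht0 : 0 ≤ t) (ht1 : t < 1) : #(roundSet x t) = k := by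
  have hceil : ⌈(k : ℝ) - t⌉ = k := by
    rw [Int.ceil_eq_iff]
    push_cast
    constructor <;> linarith
  have h := partialSum_indic_roundSet h0 h1 ht0 ht1 n le_rfl
  rw [partialSum_eq_sum, sum_indic, partialSum_eq_sum, hsum, hceil] at h
  exact_mod_cast h

theorem cycSum_indic_roundSet_le {k : ℕ} (hsum : ∑ a, x a = k) (h0 : ∀ a, 0 ≤ x a)
    (h1 : ∀ a, x a ≤ 1) (ht0 : 0 ≤ t) (ht1 : t < 1) {i m : Fin n} {b : ℤ}
    (h : cycSum x i m ≤ b) : cycSum (indic (roundSet x t)) i m ≤ b := by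
  set s : ℤ := if m < i then k else 0 with hs
  have hwrap : ∀ y : Fin n → ℝ, ∑ a, y a = k → (if m < i then ∑ a, y a else 0) = (s : ℝ) := by
    intro y hy
    rw [hy, hs]
    split_ifs <;> simp
  have hx := cycSum_add_partialSum x i m
  have hy := cycSum_add_partialSum (indic (roundSet x t)) i m
  rw [hwrap x hsum] at hx
  rw [hwrap _ (by rw [sum_indic, card_roundSet hsum h0 h1 ht0 ht1]),
    partialSum_indic_roundSet h0 h1 ht0 ht1 _ i.isLt.le,
    partialSum_indic_roundSet h0 h1 ht0 ht1 _ m.isLt.le] at hy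
  have hceil : ⌈partialSum x m - t + s⌉ ≤ ⌈partialSum x i - t + b⌉ :=
    Int.ceil_mono (by linarith)
  rw [Int.ceil_add_intCast, Int.ceil_add_intCast] at hceil
  have hceil' : ((⌈partialSum x m - t⌉ + s : ℤ) : ℝ) ≤ ((⌈partialSum x i - t⌉ + b : ℤ) : ℝ) :=
    Int.cast_le.2 hceil
  push_cast at hceil'
  linarith

end Rounding

theorem ceil_sub_eq_floor_add_ite {R : Type*} [CommRing R] [LinearOrder R] [IsStrictOrderedRing R]
    [FloorRing R] (y : R) {t : R} (ht0 : 0 ≤ t) (ht1 : t < 1) :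
    ⌈y - t⌉ = ⌊y⌋ + if t < Int.fract y then 1 else 0 := by
  have hy := Int.floor_add_fract y
  have hf0 := Int.fract_nonneg y
  have hf1 := Int.fract_lt_one y
  rw [Int.ceil_eq_iff]
  split_ifs <;> push_cast <;> constructor <;> linarith

section CutPoint

variable {D : Finset ℝ}

/-- The `#D` gaps `cutPoint D (l + 1) - cutPoint D l` cut `[0, 1)` at the points of `D`. -/
noncomputable def cutPoint (D : Finset ℝ) (l : ℕ) : ℝ := (D.sort (· ≤ ·)).getD l 1

theorem cutPoint_of_lt {l : ℕ} (hl : l < #D) : cutPoint D l = D.orderEmbOfFin rfl ⟨l, hl⟩ := by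
  rw [cutPoint, List.getD_eq_getElem _ _ (by rwa [length_sort]), orderEmbOfFin_apply]
  rfl

theorem cutPoint_of_le {l : ℕ} (hl : #D ≤ l) : cutPoint D l = 1 :=
  List.getD_eq_default _ _ (by rwa [length_sort])

theorem cutPoint_mem {l : ℕ} (hl : l < #D) : cutPoint D l ∈ D := by
  rw [cutPoint_of_lt hl]
  exact orderEmbOfFin_mem D rfl _

theorem cutPoint_lt_cutPoint_iff {l r : ℕ} (hl : l < #D) (hr : r < #D) :
    cutPoint D l < cutPoint D r ↔ l < r := by
  rw [cutPoint_of_lt hl, cutPoint_of_lt hr, OrderEmbedding.lt_iff_lt, Fin.mk_lt_mk]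

theorem cutPoint_le_cutPoint_iff {l r : ℕ} (hl : l < #D) (hr : r < #D) :
    cutPoint D l ≤ cutPoint D r ↔ l ≤ r := by
  rw [cutPoint_of_lt hl, cutPoint_of_lt hr, OrderEmbedding.le_iff_le, Fin.mk_le_mk]

theorem exists_cutPoint_eq {t : ℝ} (ht : t ∈ D) : ∃ r < #D, cutPoint D r = t := by
  obtain ⟨r, hr⟩ : t ∈ Set.range (D.orderEmbOfFin rfl) := by rwa [range_orderEmbOfFin]
  exact ⟨r, r.2, by rw [cutPoint_of_lt r.2, ← hr]⟩

theorem cutPoint_le_succ (hD : ∀ t ∈ D, t ∈ Set.Ico (0 : ℝ) 1) {l : ℕ} (hl : l < #D) :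
    cutPoint D l ≤ cutPoint D (l + 1) := by
  rcases lt_or_ge (l + 1) #D with h | h
  · exact (cutPoint_le_cutPoint_iff hl h).2 l.le_succ
  · rw [cutPoint_of_le h]
    exact (hD _ (cutPoint_mem hl)).2.le

theorem cutPoint_zero (hD : ∀ t ∈ D, t ∈ Set.Ico (0 : ℝ) 1) (hD0 : (0 : ℝ) ∈ D) :
    cutPoint D 0 = 0 := by
  obtain ⟨r, hr, hr0⟩ := exists_cutPoint_eq hD0
  have hpos : 0 < #D := card_pos.2 ⟨0, hD0⟩
  refine le_antisymm ?_ (hD _ (cutPoint_mem hpos)).1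
  rw [← hr0]
  exact (cutPoint_le_cutPoint_iff hpos hr).2 r.zero_le

theorem sum_cutPoint_sub (hD : ∀ t ∈ D, t ∈ Set.Ico (0 : ℝ) 1) (hD0 : (0 : ℝ) ∈ D) :
    ∑ l ∈ range #D, (cutPoint D (l + 1) - cutPoint D l) = 1 := by
  rw [sum_range_sub (cutPoint D), cutPoint_of_le le_rfl, cutPoint_zero hD hD0, sub_zero]

theorem sum_cutPoint_sub_mul_ceil (hD : ∀ t ∈ D, t ∈ Set.Ico (0 : ℝ) 1) (hD0 : (0 : ℝ) ∈ D)
    {y : ℝ} (hy : Int.fract y ∈ D) :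
    ∑ l ∈ range #D, (cutPoint D (l + 1) - cutPoint D l) * ⌈y - cutPoint D l⌉ = y := by
  obtain ⟨r, hr, hry⟩ := exists_cutPoint_eq hy
  have hterm : ∀ l ∈ range #D,
      (cutPoint D (l + 1) - cutPoint D l) * ⌈y - cutPoint D l⌉ =
        (cutPoint D (l + 1) - cutPoint D l) * ⌊y⌋ +
          if l < r then cutPoint D (l + 1) - cutPoint D l else 0 := by
    intro l hl
    have hl := mem_range.1 hl
    rw [ceil_sub_eq_floor_add_ite y (hD _ (cutPoint_mem hl)).1 (hD _ (cutPoint_mem hl)).2, ← hry]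
    simp only [cutPoint_lt_cutPoint_iff hl hr]
    split_ifs <;> push_cast <;> ring
  have hfilter : {l ∈ range #D | l < r} = range r := by
    ext l
    simp only [mem_filter, mem_range]
    omega
  rw [sum_congr rfl hterm, sum_add_distrib, ← sum_mul, sum_cutPoint_sub hD hD0, one_mul,
    ← sum_filter, hfilter, sum_range_sub, cutPoint_zero hD hD0, hry]
  linarith [Int.floor_add_fract y]

end CutPoint

theorem necklaceIneqSet_subset_PJ [NeZero n] {k : ℕ} {J : Fin n → Finset (Fin n)}
    (hJ : ∀ i, #(J i) = k) : necklaceIneqSet n k J ⊆ PJ n k J := by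
  intro x hx
  have h1 := le_one_of_mem_necklaceIneqSet hJ hx
  obtain ⟨hsum, h0, hle⟩ := hx
  set D : Finset ℝ := (range (n + 1)).image fun c => Int.fract (partialSum x c)
  have hD : ∀ t ∈ D, t ∈ Set.Ico (0 : ℝ) 1 := by
    simp only [D, mem_image]
    rintro _ ⟨c, -, rfl⟩
    exact ⟨Int.fract_nonneg _, Int.fract_lt_one _⟩
  have hDmem : ∀ c ≤ n, Int.fract (partialSum x c) ∈ D :=
    fun c hc => mem_image_of_mem _ (mem_range.2 (by omega))
  have hD0 : (0 : ℝ) ∈ D := by simpa [partialSum_zero] using hDmem 0 n.zero_le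
  have hround : ∀ l ∈ range #D, roundSet x (cutPoint D l) ∈ necklaceBases n k J := by
    intro l hl
    have ht := hD _ (cutPoint_mem (mem_range.1 hl))
    refine (mem_necklaceBases_iff hJ).2 ⟨card_roundSet hsum h0 h1 ht.1 ht.2, fun i j => ?_⟩
    exact_mod_cast cycSum_indic_roundSet_le hsum h0 h1 ht.1 ht.2 (b := (j : ℕ))
      (by exact_mod_cast hle i j)
  have hdecomp : ∑ l ∈ range #D,
      (cutPoint D (l + 1) - cutPoint D l) • indic (roundSet x (cutPoint D l)) = x := by
    funext a
    simp only [Finset.sum_apply, Pi.smul_apply, smul_eq_mul, indic_roundSet_apply h0 h1,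
      Int.cast_sub, mul_sub, sum_sub_distrib]
    rw [sum_cutPoint_sub_mul_ceil hD hD0 (hDmem _ a.isLt),
      sum_cutPoint_sub_mul_ceil hD hD0 (hDmem _ a.isLt.le), partialSum_succ x a.isLt]
    ring
  rw [← hdecomp]
  exact (convex_convexHull ℝ _).sum_mem
    (fun l hl => sub_nonneg.2 (cutPoint_le_succ hD (mem_range.1 hl))) (sum_cutPoint_sub hD hD0)
    fun l hl => subset_convexHull ℝ _ ⟨_, hround l hl, rfl⟩

theorem positroid_polytope_inequality_description_general
    (n k : ℕ) [NeZero n]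
    (J : Fin n → Finset (Fin n)) (hJ : IsGrassmannNecklace n k J) :
    PJ n k J =
      {x : Fin n → ℝ | (∑ a, x a) = (k : ℝ) ∧ (∀ a, 0 ≤ x a) ∧
        ∀ i : Fin n, ∀ j : Fin k, cycSum x i (nthGale i (J i) j.val) ≤ (j.val : ℝ)} := by
  have hcard : ∀ i, #(J i) = k := hJ.1
  refine (convexHull_min ?_ convex_necklaceIneqSet).antisymm (necklaceIneqSet_subset_PJ hcard)
  rintro _ ⟨B, hB, rfl⟩
  exact indic_mem_necklaceIneqSet hcard hB

theorem positroid_polytope_inequality_description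
    (n k : ℕ) [NeZero n] (hk1 : 1 ≤ k) (hkn : k ≤ n)
    (J : Fin n → Finset (Fin n)) (hJ : IsGrassmannNecklace n k J) :
    PJ n k J =
      {x : Fin n → ℝ | (∑ a, x a) = (k : ℝ) ∧ (∀ a, 0 ≤ x a) ∧
        ∀ i : Fin n, ∀ j : Fin k, cycSum x i (nthGale i (J i) j.val) ≤ (j.val : ℝ)} :=
  positroid_polytope_inequality_description_general n k J hJ

end PositroidPaper
end

section
/- Let n ≥ 2 and let w = w_1⋯w_n ∈ S_n with w_n = n. Then for every x ∈ Δ_(w) and all i, j ∈ [n] with i ≠ j: cdes_L(w|_{[i,j]}) − 1 ≤ x_{[i,j]} ≤ cdes_L(w|_{[i,j]}). -/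
namespace PositroidPaper

variable {n : ℕ}

/-
The vertex `e_{I_r(w)}` of `Δ_(w)` records the cyclic left descents of the rotation `w^{(r)}`, so
`x_{[i,j]}` at that vertex counts the descents of the walk `w⁻¹(i), w⁻¹(i+1), …, w⁻¹(j)` in `ℤ/n`
with respect to the order starting at `s = w⁻¹(r) + 1`. A step `a → b` is such a descent exactly
when the addition `(a - s) + (b - a) = b - s` carries, so telescoping shows that `n` times the
number of descents, less the indicator that the direct step from `w⁻¹(i)` to `w⁻¹(j)` is a
descent, is the length of the walk minus the length of the direct step: a quantity that does not
depend on `s`. For `s = 0` it equals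
`cdes_L(w|_{[i,j]}) - 1`, hence every vertex has `x_{[i,j]} = cdes_L(w|_{[i,j]}) - 1 + δ` with
`δ ∈ {0, 1}`, and the two linear bounds pass to the convex hull.
-/

section CyclicDescents

/-- `1` when `b` precedes `a` in the `s`-order, i.e. when the step from `a` forward to `b`
around `ℤ/n` passes `s`. -/
def descentInd (s a b : Fin n) : ℝ := if b - s < a - s then 1 else 0

lemma descentInd_nonneg (s a b : Fin n) : 0 ≤ descentInd s a b := by
  unfold descentInd; split_ifs <;> norm_num

lemma descentInd_le_one (s a b : Fin n) : descentInd s a b ≤ 1 := by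
  unfold descentInd; split_ifs <;> norm_num

lemma val_sub_eq_ite (a b : Fin n) :
    (a - b).val = if b ≤ a then a.val - b.val else n + a.val - b.val := by
  split_ifs with h
  · exact Fin.coe_sub_iff_le.2 h
  · exact Fin.coe_sub_iff_lt.2 (not_le.1 h)

/-- The carry of the addition `(a - s) + (b - a) = b - s` in `ℤ/n` is the descent indicator. -/
lemma natCast_mul_descentInd (s a b : Fin n) :
    (n : ℝ) * descentInd s a b = (a - s).val + (b - a).val - (b - s).val := by
  have carry : (a - s).val + (b - a).val = (b - s).val + n * if b - s < a - s then 1 else 0 := by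
    have := a.isLt; have := b.isLt; have := s.isLt
    simp only [Fin.lt_def, val_sub_eq_ite, Fin.le_def]
    split_ifs <;> omega
  have carry_real := congrArg (Nat.cast : ℕ → ℝ) carry
  push_cast at carry_real
  unfold descentInd
  split_ifs at carry_real ⊢ <;> linarith

lemma natCast_mul_sum_descentInd_sub (q : ℕ → Fin n) (s : Fin n) (m : ℕ) :
    (n : ℝ) * (∑ k ∈ Finset.range m, descentInd s (q k) (q (k + 1)) - descentInd s (q 0) (q m))
      = ∑ k ∈ Finset.range m, ((q (k + 1) - q k).val : ℝ) - (q m - q 0).val := by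
  have step : ∀ k, (n : ℝ) * descentInd s (q k) (q (k + 1))
      = ((q k - s).val - (q (k + 1) - s).val) + (q (k + 1) - q k).val := fun k => by
    rw [natCast_mul_descentInd]; ring
  rw [mul_sub, Finset.mul_sum, Finset.sum_congr rfl fun k _ => step k, Finset.sum_add_distrib,
    Finset.sum_range_sub' (fun k => ((q k - s).val : ℝ)), natCast_mul_descentInd]
  ring

lemma sum_descentInd_sub_descentInd_eq [NeZero n] (q : ℕ → Fin n) (s t : Fin n) (m : ℕ) :
    ∑ k ∈ Finset.range m, descentInd s (q k) (q (k + 1)) - descentInd s (q 0) (q m)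
      = ∑ k ∈ Finset.range m, descentInd t (q k) (q (k + 1)) - descentInd t (q 0) (q m) :=
  mul_left_cancel₀ (Nat.cast_ne_zero.2 (NeZero.ne n))
    ((natCast_mul_sum_descentInd_sub q s m).trans (natCast_mul_sum_descentInd_sub q t m).symm)

end CyclicDescents

lemma mem_cycInterval (i j a : Fin n) : a ∈ cycInterval i j ↔ (a - i).val ≤ (j - i).val := by
  simp only [cycInterval, Finset.mem_filter, Finset.mem_univ, true_and, Fin.le_def]

section CyclicIntervals

open Fin.NatCast

variable [NeZero n]

lemma val_add_natCast_sub (i : Fin n) {k : ℕ} (hk : k < n) : (i + (k : Fin n) - i).val = k := by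
  rw [add_sub_cancel_left, Fin.val_natCast, Nat.mod_eq_of_lt hk]

lemma sum_filter_val_sub_lt {M : Type*} [AddCommMonoid M] (f : Fin n → M) (i : Fin n) {m : ℕ}
    (hm : m ≤ n) :
    ∑ a ∈ Finset.univ.filter (fun a => (a - i).val < m), f a
      = ∑ k ∈ Finset.range m, f (i + (k : Fin n)) := by
  refine Finset.sum_nbij' (fun a => (a - i).val) (fun k => i + (k : Fin n)) ?_ ?_ ?_ ?_ ?_
  · simp
  · intro k hk
    have hkm := Finset.mem_range.1 hk
    simp [Nat.mod_eq_of_lt (hkm.trans_le hm), hkm]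
  · simp
  · intro k hk
    exact val_add_natCast_sub i ((Finset.mem_range.1 hk).trans_le hm)
  · simp

lemma cycSum_eq_sum_range (x : Fin n → ℝ) (i j : Fin n) :
    cycSum x i j = ∑ k ∈ Finset.range (j - i).val, x (i + (k : Fin n)) := by
  rw [← sum_filter_val_sub_lt x i (j - i).isLt.le]
  rfl

lemma sum_cycInterval {M : Type*} [AddCommMonoid M] (f : Fin n → M) (i j : Fin n) :
    ∑ a ∈ cycInterval i j, f a = ∑ k ∈ Finset.range ((j - i).val + 1), f (i + (k : Fin n)) := by
  rw [← sum_filter_val_sub_lt f i (j - i).isLt]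
  congr 1
  ext a
  simp [mem_cycInterval]

lemma mem_cDesL_cycInterval_of_lt (w : Equiv.Perm (Fin n)) (i j : Fin n) {k : ℕ}
    (hk : k < (j - i).val) :
    i + (k : Fin n) ∈ cDesL w i (cycInterval i j) ↔
      w⁻¹ (i + (k + 1 : ℕ)) < w⁻¹ (i + (k : Fin n)) := by
  have hkn : k + 1 < n := (Nat.succ_le_of_lt hk).trans_lt (j - i).isLt
  have hkey : ∀ {l : ℕ}, l < n → (i + (l : Fin n) - i).val = l := val_add_natCast_sub i
  have hsucc : i + ((k + 1 : ℕ) : Fin n) ∈ cycInterval i j := by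
    rw [mem_cycInterval, hkey hkn]; exact hk
  simp only [cDesL, Finset.mem_filter, Fin.lt_def, Fin.le_def, hkey (k.lt_succ_self.trans hkn)]
  constructor
  · rintro ⟨-, ⟨b, hb, hkb, hmin, hlt⟩ | ⟨hmax, -⟩⟩
    · have hb_key : (b - i).val = k + 1 :=
        le_antisymm (hkey hkn ▸ hmin _ hsucc (by rw [hkey hkn]; omega)) hkb
      have hb_eq : b = i + ((k + 1 : ℕ) : Fin n) := by
        rw [← hb_key, Fin.cast_val_eq_self, add_sub_cancel]
      rwa [hb_eq] at hlt
    · have := hmax j ((mem_cycInterval i j j).2 le_rfl)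
      omega
  · intro hlt
    refine ⟨(mem_cycInterval _ _ _).2 (by rw [hkey (k.lt_succ_self.trans hkn)]; omega),
      Or.inl ⟨_, hsucc, by rw [hkey hkn]; omega, fun c _ hc => by rw [hkey hkn]; omega, hlt⟩⟩

lemma mem_cDesL_cycInterval_self_right (w : Equiv.Perm (Fin n)) {i j : Fin n} (hij : i ≠ j) :
    j ∈ cDesL w i (cycInterval i j) ↔ w⁻¹ i < w⁻¹ j := by
  have hi : i ∈ cycInterval i j := by simp [mem_cycInterval]
  have hj : j ∈ cycInterval i j := (mem_cycInterval i j j).2 le_rfl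
  simp only [cDesL, Finset.mem_filter, Fin.lt_def, Fin.le_def]
  constructor
  · rintro ⟨-, ⟨b, hb, hjb, -⟩ | ⟨-, c, -, -, hmin, hlt⟩⟩
    · have := (mem_cycInterval i j b).1 hb
      omega
    · have hc : c = i := by
        have := hmin i hi
        rw [sub_self] at this
        exact sub_eq_zero.1 (Fin.ext (by simpa using this))
      rwa [hc] at hlt
  · intro hlt
    exact ⟨hj, Or.inr ⟨fun b hb => (mem_cycInterval i j b).1 hb, i, hi, hij, by simp, hlt⟩⟩

lemma mem_cDesL_univ (hn : 2 ≤ n) (u : Equiv.Perm (Fin n)) (a : Fin n) :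
    a ∈ cDesL u 0 Finset.univ ↔ u⁻¹ (a + 1) < u⁻¹ a := by
  have hlast : (lastF n - 0).val = n - 1 := by simp [lastF]
  have huniv : (Finset.univ : Finset (Fin n)) = cycInterval 0 (lastF n) := by
    ext b
    simp only [Finset.mem_univ, mem_cycInterval, sub_zero, true_iff, lastF]
    omega
  rw [huniv]
  rcases lt_or_eq_of_le (Nat.le_sub_one_of_lt a.isLt) with ha | ha
  · have := mem_cDesL_cycInterval_of_lt u 0 (lastF n) (k := a.val) (by rwa [hlast])
    simpa using this
  · have ha_last : a = lastF n := Fin.ext ha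
    have hne : (0 : Fin n) ≠ lastF n := by simp [Fin.ext_iff, lastF]; omega
    have hwrap : lastF n + 1 = 0 := by
      rw [Fin.ext_iff, Fin.val_add, Fin.val_one', Nat.one_mod_eq_one.2 (by omega)]
      simp [lastF, Nat.sub_add_cancel (NeZero.one_le : 1 ≤ n)]
    rw [ha_last, mem_cDesL_cycInterval_self_right u hne, hwrap]

lemma rotTo_inv_apply (w : Equiv.Perm (Fin n)) (r x : Fin n) :
    (rotTo w r)⁻¹ x = w⁻¹ x - (w⁻¹ r + 1) := by
  rw [rotTo, Equiv.Perm.inv_def, Equiv.symm_trans_apply, Equiv.addRight_symm_apply,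
    Equiv.Perm.inv_def, sub_eq_add_neg]

lemma cycSum_indic_IrFinset_eq_sum (hn : 2 ≤ n) (w : Equiv.Perm (Fin n)) (r i j : Fin n) :
    cycSum (indic (IrFinset w r)) i j = ∑ k ∈ Finset.range (j - i).val,
      descentInd (w⁻¹ r + 1) (w⁻¹ (i + (k : Fin n))) (w⁻¹ (i + (k + 1 : ℕ))) := by
  rw [cycSum_eq_sum_range]
  refine Finset.sum_congr rfl fun k _ => ?_
  simp only [indic, descentInd, IrFinset, mem_cDesL_univ hn, rotTo_inv_apply, Nat.cast_succ,
    add_assoc]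

lemma cdesL_cycInterval_eq_sum (w : Equiv.Perm (Fin n)) {i j : Fin n} (hij : i ≠ j) :
    (cdesL w i (cycInterval i j) : ℝ) = ∑ k ∈ Finset.range (j - i).val,
      descentInd 0 (w⁻¹ (i + (k : Fin n))) (w⁻¹ (i + (k + 1 : ℕ)))
        + 1 - descentInd 0 (w⁻¹ i) (w⁻¹ j) := by
  have hsub : cDesL w i (cycInterval i j) ⊆ cycInterval i j := Finset.filter_subset _ _
  have hj : i + (((j - i).val : ℕ) : Fin n) = j := by simp
  have hne_inv : w⁻¹ i ≠ w⁻¹ j := fun h => hij (w⁻¹.injective h)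
  have htop : (if j ∈ cDesL w i (cycInterval i j) then (1 : ℝ) else 0)
      = 1 - descentInd 0 (w⁻¹ i) (w⁻¹ j) := by
    simp only [mem_cDesL_cycInterval_self_right w hij, descentInd, sub_zero]
    rcases hne_inv.lt_or_gt with h | h
    · rw [if_pos h, if_neg h.not_gt, sub_zero]
    · rw [if_pos h, if_neg h.not_gt, sub_self]
  rw [cdesL, ← Finset.inter_eq_right.2 hsub, ← Finset.filter_mem_eq_inter, ← Finset.sum_boole,
    sum_cycInterval, Finset.sum_range_succ, hj, htop, add_sub_assoc]
  congr 1
  refine Finset.sum_congr rfl fun k hk => ?_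
  simp only [mem_cDesL_cycInterval_of_lt w i j (Finset.mem_range.1 hk), descentInd, sub_zero]

lemma cycSum_indic_IrFinset (hn : 2 ≤ n) (w : Equiv.Perm (Fin n)) (r : Fin n) {i j : Fin n}
    (hij : i ≠ j) :
    cycSum (indic (IrFinset w r)) i j
      = cdesL w i (cycInterval i j) - 1 + descentInd (w⁻¹ r + 1) (w⁻¹ i) (w⁻¹ j) := by
  have base_change := sum_descentInd_sub_descentInd_eq (fun k : ℕ => w⁻¹ (i + (k : Fin n)))
    (w⁻¹ r + 1) 0 (j - i).val
  simp only [Nat.cast_zero, add_zero, Fin.cast_val_eq_self, add_sub_cancel] at base_change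
  rw [cycSum_indic_IrFinset_eq_sum hn, cdesL_cycInterval_eq_sum w hij]
  linarith

end CyclicIntervals

lemma isLinearMap_cycSum (i j : Fin n) : IsLinearMap ℝ (fun x : Fin n → ℝ => cycSum x i j) where
  map_add x y := by simp only [cycSum, Pi.add_apply, Finset.sum_add_distrib]
  map_smul c x := by simp only [cycSum, Pi.smul_apply, smul_eq_mul, Finset.mul_sum]

theorem w_simplex_cyclic_sum_bounds_general
    (n : ℕ) [NeZero n] (hn : 2 ≤ n) (w : Equiv.Perm (Fin n)) :
    ∀ x ∈ simplexW w, ∀ i j : Fin n, i ≠ j →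
      (cdesL w i (cycInterval i j) : ℝ) - 1 ≤ cycSum x i j ∧
        cycSum x i j ≤ (cdesL w i (cycInterval i j) : ℝ) := by
  intro x hx i j hij
  have hlin := isLinearMap_cycSum (n := n) i j
  have hvert : vertexSet w ⊆ {y | (cdesL w i (cycInterval i j) : ℝ) - 1 ≤ cycSum y i j} ∩
      {y | cycSum y i j ≤ (cdesL w i (cycInterval i j) : ℝ)} := by
    rintro _ ⟨r, rfl⟩
    rw [Set.mem_inter_iff, Set.mem_ofPred_eq, Set.mem_ofPred_eq,
      cycSum_indic_IrFinset hn w r hij]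
    exact ⟨by linarith [descentInd_nonneg (w⁻¹ r + 1) (w⁻¹ i) (w⁻¹ j)],
      by linarith [descentInd_le_one (w⁻¹ r + 1) (w⁻¹ i) (w⁻¹ j)]⟩
  exact convexHull_min hvert ((convex_halfSpace_ge hlin _).inter (convex_halfSpace_le hlin _)) hx

theorem w_simplex_cyclic_sum_bounds
    (n : ℕ) [NeZero n] (hn : 2 ≤ n) (w : Equiv.Perm (Fin n))
    (hw : w (lastF n) = lastF n) :
    ∀ x ∈ simplexW w, ∀ i j : Fin n, i ≠ j →
      (cdesL w i (cycInterval i j) : ℝ) - 1 ≤ cycSum x i j ∧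
        cycSum x i j ≤ (cdesL w i (cycInterval i j) : ℝ) :=
  w_simplex_cyclic_sum_bounds_general n hn w

end PositroidPaper
end

section
/- Let n ≥ 1 and w ∈ S_n. Then the following identity holds in ℤ[[z]]: (1−z)^{n+1} · ∑_{t≥1} L(∇°_w, t) z^t = z^{des(w)+1}, where L(∇°_w, t) := |t·∇°_w ∩ ℤ^n| and des(w) := #{i ∈ [n−1] : w_i > w_{i+1}}. -/
namespace PositroidPaper

variable {n : ℕ}

/-! Read along `w`, the lattice points of `t • ∇°_w` are the integer sequences
`b₀, …, b_{n-1}` with `1 ≤ b₀`, `b_{n-1} ≤ t` that increase weakly at the ascents and strictly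
at the descents of `w`. Adding to `b_j` the number of ascents before position `j` makes them exactly the strictly
increasing sequences in `[1, t + n - 1 - des w]`, so `L(∇°_w, t) = C(t + n - 1 - des w, n)`;
and `∑ₜ C(t - e + n, n) zᵗ = zᵉ / (1 - z)ⁿ⁺¹` with `e = des w + 1`. -/

theorem ncard_strictMono_mem {α : Type*} [LinearOrder α] (s : Finset α) (k : ℕ) :
    {c : Fin k → α | StrictMono c ∧ ∀ j, c j ∈ s}.ncard = s.card.choose k := by
  have hrange : {c : Fin k → α | StrictMono c ∧ ∀ j, c j ∈ s} =
      Set.range (fun f : Fin k ↪o s => Subtype.val ∘ f) := by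
    ext c
    constructor
    · rintro ⟨hc, hs⟩
      exact ⟨OrderEmbedding.ofStrictMono (fun j => ⟨c j, hs j⟩) hc, rfl⟩
    · rintro ⟨f, rfl⟩
      exact ⟨fun i j hij => f.strictMono hij, fun j => (f j).2⟩
  have hinj : Function.Injective (fun f : Fin k ↪o s => Subtype.val ∘ f) :=
    fun f g hfg => RelEmbedding.ext fun j => Subtype.ext (congrFun hfg j)
  rw [hrange, Set.ncard_range_of_injective hinj,
    Nat.card_congr Set.powersetCard.ofFinEmbEquiv, Set.powersetCard.card, Nat.card_eq_fintype_card,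
    Fintype.card_coe]

section

variable {m : ℕ}

/-- Subtracting these partial sums turns a sequence with gaps at least `g i` into a strictly
increasing one. -/
def gapShift (g : Fin m → ℤ) (j : Fin (m + 1)) : ℤ :=
  ∑ i with i.castSucc < j, (g i - 1)

lemma gapShift_zero (g : Fin m → ℤ) : gapShift g 0 = 0 := by
  simp [gapShift]

lemma gapShift_last (g : Fin m → ℤ) : gapShift g (Fin.last m) = ∑ i, (g i - 1) := by
  simp [gapShift, Fin.castSucc_lt_last]

lemma gapShift_succ (g : Fin m → ℤ) (i : Fin m) :
    gapShift g i.succ = gapShift g i.castSucc + (g i - 1) := by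
  have hIic : ({i' | i'.castSucc < i.succ} : Finset (Fin m)) = Finset.Iic i := by
    ext; simp
  have hIio : ({i' | i'.castSucc < i.castSucc} : Finset (Fin m)) = Finset.Iio i := by
    ext; simp
  rw [gapShift, gapShift, hIic, hIio, ← Finset.Iio_insert,
    Finset.sum_insert Finset.notMem_Iio_self, add_comm]

lemma strictMono_sub_gapShift_iff (g : Fin m → ℤ) (b : Fin (m + 1) → ℤ) :
    StrictMono (b - gapShift g) ↔ ∀ i, b i.castSucc + g i ≤ b i.succ := by
  simp only [Fin.strictMono_iff_lt_succ, Pi.sub_apply, gapShift_succ]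
  exact forall_congr' fun i => by omega

theorem ncard_seqs_with_min_gaps (g : Fin m → ℤ) (lo hi : ℤ) :
    {b : Fin (m + 1) → ℤ | lo ≤ b 0 ∧ b (Fin.last m) ≤ hi ∧
        ∀ i, b i.castSucc + g i ≤ b i.succ}.ncard =
      (hi + 1 - lo - ∑ i, (g i - 1)).toNat.choose (m + 1) := by
  set hi' := hi - ∑ i, (g i - 1)
  have hpre : {b : Fin (m + 1) → ℤ | lo ≤ b 0 ∧ b (Fin.last m) ≤ hi ∧
        ∀ i, b i.castSucc + g i ≤ b i.succ} =
      (Equiv.subRight (gapShift g)) ⁻¹'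
        {c | StrictMono c ∧ ∀ j, c j ∈ Finset.Icc lo hi'} := by
    ext b
    simp only [Set.mem_ofPred_eq, Set.mem_preimage, Equiv.subRight_apply, Finset.mem_Icc,
      strictMono_sub_gapShift_iff]
    constructor
    · rintro ⟨hlo, hhi, hgap⟩
      have hmono := (strictMono_sub_gapShift_iff g b).2 hgap
      refine ⟨hgap, fun j => ⟨?_, ?_⟩⟩
      · calc lo ≤ (b - gapShift g) 0 := by simpa [gapShift_zero] using hlo
          _ ≤ (b - gapShift g) j := hmono.monotone (Fin.zero_le j)
      · calc (b - gapShift g) j ≤ (b - gapShift g) (Fin.last m) := hmono.monotone (Fin.le_last j)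
          _ ≤ hi' := by simp [gapShift_last, hi', hhi]
    · rintro ⟨hgap, hbound⟩
      have h0 := (hbound 0).1
      have hlast := (hbound (Fin.last m)).2
      simp only [Pi.sub_apply, gapShift_zero, gapShift_last, hi'] at h0 hlast
      exact ⟨by omega, by omega, hgap⟩
  rw [hpre, Set.ncard_preimage_of_injective_subset_range (Equiv.injective _) (by simp),
    ncard_strictMono_mem, Int.card_Icc]
  congr 2
  ring

theorem Lcount_eq_ncard (X : Set (Fin m → ℝ)) {t : ℕ} (ht : t ≠ 0) :
    Lcount X t = {z : Fin m → ℤ | (t : ℝ)⁻¹ • (Int.cast ∘ z) ∈ X}.ncard := by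
  have htR : (t : ℝ) ≠ 0 := Nat.cast_ne_zero.2 ht
  have himage :
      (fun x : Fin m → ℝ => (t : ℝ) • x) '' X ∩ {x | ∀ a, ∃ z : ℤ, x a = (z : ℝ)} =
        (Int.cast ∘ ·) '' {z : Fin m → ℤ | (t : ℝ)⁻¹ • (Int.cast ∘ z) ∈ X} := by
    ext x
    constructor
    · rintro ⟨⟨y, hy, rfl⟩, hint⟩
      choose z hz using hint
      refine ⟨z, ?_, funext fun a => (hz a).symm⟩
      have : Int.cast ∘ z = (t : ℝ) • y := funext fun a => (hz a).symm
      simpa [this, smul_smul, htR] using hy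
    · rintro ⟨z, hz, rfl⟩
      exact ⟨⟨_, hz, by simp [smul_smul, htR]⟩, fun a => ⟨z a, rfl⟩⟩
  rw [Lcount, himage, Set.ncard_image_of_injective _
    (Function.Injective.comp_left Int.cast_injective)]

lemma lastF_eq_last : lastF (m + 1) = Fin.last m :=
  Fin.ext (by simp [lastF])

def descentGap (w : Equiv.Perm (Fin (m + 1))) (i : Fin m) : ℤ :=
  if w i.succ < w i.castSucc then 1 else 0

lemma mem_nablaO_iff (w : Equiv.Perm (Fin (m + 1))) (y : Fin (m + 1) → ℝ) :
    y ∈ nablaO w ↔ 0 < y (w 0) ∧ y (w (Fin.last m)) ≤ 1 ∧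
      ∀ i : Fin m, (w i.castSucc < w i.succ → y (w i.castSucc) ≤ y (w i.succ)) ∧
        (w i.succ < w i.castSucc → y (w i.castSucc) < y (w i.succ)) := by
  simp only [nablaO, Set.mem_ofPred_eq, lastF_eq_last, Fin.forall_fin_succ', ne_eq,
    Fin.castSucc_ne_last, not_false_eq_true, forall_const, Fin.coeSucc_eq_succ, not_true_eq_false,
    IsEmpty.forall_iff, and_true]

lemma desNum_eq_sum_descentGap (w : Equiv.Perm (Fin (m + 1))) :
    (desNum w : ℤ) = ∑ i, descentGap w i := by
  classical
  rw [desNum, Finset.card_filter, Fin.sum_univ_castSucc]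
  simp [lastF_eq_last, Fin.castSucc_ne_last, Fin.coeSucc_eq_succ, descentGap]

lemma smul_intCast_mem_nablaO_iff (w : Equiv.Perm (Fin (m + 1))) {t : ℕ} (ht : t ≠ 0)
    (z : Fin (m + 1) → ℤ) :
    (t : ℝ)⁻¹ • (Int.cast ∘ z) ∈ nablaO w ↔
      1 ≤ z (w 0) ∧ z (w (Fin.last m)) ≤ t ∧
        ∀ i, z (w i.castSucc) + descentGap w i ≤ z (w i.succ) := by
  have htR : (0 : ℝ) < t := Nat.cast_pos.2 (Nat.pos_of_ne_zero ht)
  simp only [mem_nablaO_iff, Pi.smul_apply, Function.comp_apply, smul_eq_mul, ← div_eq_inv_mul,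
    div_pos_iff_of_pos_right htR, div_le_one htR, div_le_div_iff_of_pos_right htR,
    div_lt_div_iff_of_pos_right htR, Int.cast_pos, Int.cast_le, Int.cast_lt]
  refine and_congr (by omega) (and_congr (by norm_cast) (forall_congr' fun i => ?_))
  have hne : w i.castSucc ≠ w i.succ := w.injective.ne Fin.castSucc_lt_succ.ne
  rcases hne.lt_or_gt with h | h <;> simp [descentGap, h, h.not_gt]

theorem Lcount_nablaO (w : Equiv.Perm (Fin (m + 1))) {t : ℕ} (ht : t ≠ 0) :
    Lcount (nablaO w) t = ((t : ℤ) + m - desNum w).toNat.choose (m + 1) := by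
  have hpre : {z : Fin (m + 1) → ℤ | (t : ℝ)⁻¹ • (Int.cast ∘ z) ∈ nablaO w} =
      (· ∘ w) ⁻¹' {b : Fin (m + 1) → ℤ | 1 ≤ b 0 ∧ b (Fin.last m) ≤ t ∧
        ∀ i, b i.castSucc + descentGap w i ≤ b i.succ} :=
    Set.ext (smul_intCast_mem_nablaO_iff w ht)
  rw [Lcount_eq_ncard _ ht, hpre, Set.ncard_preimage_of_injective_subset_range
      w.surjective.injective_comp_right (by simp [w.injective.surjective_comp_right.range_eq]),
    ncard_seqs_with_min_gaps, desNum_eq_sum_descentGap, Finset.sum_sub_distrib]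
  simp only [Finset.sum_const, Finset.card_univ, Fintype.card_fin, nsmul_eq_mul, mul_one]
  congr 2
  ring

end

theorem one_sub_X_pow_mul_mk_choose (R : Type*) [CommRing R] {k : ℕ} (hk : k ≠ 0) (e : ℕ) :
    (1 - PowerSeries.X : PowerSeries R) ^ (k + 1) *
        PowerSeries.mk (fun t => ((((t : ℤ) + k - e).toNat.choose k : ℕ) : R)) =
      PowerSeries.X ^ e := by
  have hshift : PowerSeries.mk (fun t => ((((t : ℤ) + k - e).toNat.choose k : ℕ) : R)) =
      PowerSeries.X ^ e * PowerSeries.mk (fun s => ((k + s).choose k : R)) := by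
    ext t
    rw [PowerSeries.coeff_mk, PowerSeries.coeff_X_pow_mul']
    split_ifs with het
    · rw [PowerSeries.coeff_mk]
      congr 2
      omega
    · have hlt : ((t : ℤ) + k - e).toNat < k := by omega
      rw [Nat.choose_eq_zero_of_lt hlt, Nat.cast_zero]
  rw [hshift, mul_left_comm, mul_comm _ (PowerSeries.mk _),
    PowerSeries.mk_add_choose_mul_one_sub_pow_eq_one, mul_one]

theorem hstar_of_half_open_simplex
    (n : ℕ) [NeZero n] (w : Equiv.Perm (Fin n)) :
    (1 - PowerSeries.X : PowerSeries ℤ) ^ (n + 1) *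
        PowerSeries.mk (fun t => if t = 0 then 0 else (Lcount (nablaO w) t : ℤ)) =
      (PowerSeries.X : PowerSeries ℤ) ^ (desNum w + 1) := by
  obtain ⟨m, rfl⟩ := Nat.exists_eq_add_one_of_ne_zero (NeZero.ne n)
  convert one_sub_X_pow_mul_mk_choose ℤ m.add_one_ne_zero (desNum w + 1) using 3
  funext t
  split_ifs with ht
  · rw [ht, Nat.choose_eq_zero_of_lt (by omega), Nat.cast_zero]
  · rw [Lcount_nablaO w ht]
    congr 3
    push_cast
    ring

end PositroidPaper
end
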